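/- arXiv:math-ph/0505012 — 2 statements merged into one kernel-verified Lean document; each statement's English description precedes it below -/
import Mathlib

section
/- Let B, D, P be elements of a Banach algebra with ‖B‖ < 1 and DB = -BD - P. Then ∑_{n≥1} (-1)^n ∑_{k=0}^{n-1} B^k D B^{n-k} = (1 - B²)^{-1} B D + (1 - B²)^{-1} P (1 + B)^{-1}, where the series converges absolutely. -/
/-!
Put `e n = Bⁿ` for even `n` and `e n = 0` for odd `n`, so that `∑ e n = (1 - B²)⁻¹`.
Peeling off the last factor `B` and using `DB = -(BD + P)`, induction on `n` shows that the
`n`-th term of the series is `e n * BD + ∑_{i ≤ n} e i * P (-B)^{n-i}`. Since `‖B‖ < 1`, the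
series is therefore `(∑ e) BD` plus the Cauchy product of `e` with `P (-B)^m`, both absolutely
convergent, and `∑ P (-B)^m = P (1 + B)⁻¹`.
-/

open Finset

section Algebra

variable {A : Type*} [Ring A]

def evenPow (B : A) (n : ℕ) : A := if Even n then B ^ n else 0

theorem evenPow_succ (B : A) (n : ℕ) :
    evenPow B (n + 1) = evenPow B n * B + (-1) ^ (n + 1) * B ^ (n + 1) := by
  rcases Nat.even_or_odd n with hn | hn
  · simp [evenPow, hn, Nat.even_add_one, hn.neg_one_pow, pow_succ]
  · simp [evenPow, hn, Nat.not_even_iff_odd.mpr hn]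

theorem sum_range_succ_pow_mul_mul_pow (B D : A) (m : ℕ) :
    ∑ k ∈ range (m + 1), B ^ k * D * B ^ (m + 1 - k) =
      (∑ k ∈ range m, B ^ k * D * B ^ (m - k)) * B + B ^ m * D * B := by
  rw [sum_range_succ, sum_mul, Nat.add_sub_cancel_left, pow_one]
  congr 1
  refine sum_congr rfl fun k hk => ?_
  rw [Nat.sub_add_comm (mem_range.mp hk).le, pow_succ, ← mul_assoc]

theorem sum_range_succ_mul_mul_pow (u : ℕ → A) (P x : A) (n : ℕ) :
    ∑ i ∈ range (n + 2), u i * (P * x ^ (n + 1 - i)) =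
      (∑ i ∈ range (n + 1), u i * (P * x ^ (n - i))) * x + u (n + 1) * P := by
  rw [sum_range_succ, sum_mul, Nat.sub_self, pow_zero, mul_one]
  congr 1
  refine sum_congr rfl fun i hi => ?_
  rw [Nat.sub_add_comm (Nat.lt_succ_iff.mp (mem_range.mp hi)), pow_succ]
  noncomm_ring

theorem neg_one_pow_mul_sum_eq {B D P : A} (h : D * B = -(B * D) - P) (n : ℕ) :
    (-1) ^ (n + 1) * ∑ k ∈ range (n + 1), B ^ k * D * B ^ (n + 1 - k) =
      evenPow B n * (B * D) + ∑ i ∈ range (n + 1), evenPow B i * (P * (-B) ^ (n - i)) := by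
  induction n with
  | zero => simp [evenPow, h]; abel
  | succ n ih =>
    have hBD : B * D + P = -(D * B) := by rw [h]; abel
    set R := ∑ i ∈ range (n + 1), evenPow B i * (P * (-B) ^ (n - i))
    calc (-1) ^ (n + 1 + 1) * ∑ k ∈ range (n + 1 + 1), B ^ k * D * B ^ (n + 1 + 1 - k)
        = -(((-1) ^ (n + 1) * ∑ k ∈ range (n + 1), B ^ k * D * B ^ (n + 1 - k)) * B)
            - (-1) ^ (n + 1) * B ^ (n + 1) * D * B := by
          rw [sum_range_succ_pow_mul_mul_pow, pow_succ _ (n + 1)]; noncomm_ring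
      _ = -((evenPow B n * (B * D) + R) * B) - (-1) ^ (n + 1) * B ^ (n + 1) * D * B := by
          rw [ih]
      _ = -((evenPow B n * B + (-1) ^ (n + 1) * B ^ (n + 1)) * (D * B)) + R * (-B) := by
          noncomm_ring
      _ = evenPow B (n + 1) * (B * D + P) + R * (-B) := by
          rw [evenPow_succ, hBD]; noncomm_ring
      _ = evenPow B (n + 1) * (B * D)
            + ∑ i ∈ range (n + 1 + 1), evenPow B i * (P * (-B) ^ (n + 1 - i)) := by
          rw [sum_range_succ_mul_mul_pow]; noncomm_ring

end Algebra

section Analysis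

variable {A : Type*} [NormedRing A] {B : A}

theorem norm_evenPow_le (B : A) (n : ℕ) : ‖evenPow B n‖ ≤ ‖B ^ n‖ := by
  unfold evenPow; split_ifs <;> simp

theorem summable_norm_evenPow (hB : ‖B‖ < 1) : Summable fun n => ‖evenPow B n‖ :=
  (summable_norm_geometric_of_norm_lt_one hB).of_nonneg_of_le (fun _ => norm_nonneg _)
    (norm_evenPow_le B)

theorem hasSum_evenPow [HasSummableGeomSeries A] (hB : ‖B‖ < 1) :
    HasSum (evenPow B) (Ring.inverse (1 - B ^ 2)) := by
  have hB2 : ‖B ^ 2‖ < 1 :=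
    (norm_pow_le' B two_pos).trans_lt (pow_lt_one₀ (norm_nonneg B) hB two_ne_zero)
  have heven : HasSum (fun k => evenPow B (2 * k)) (Ring.inverse (1 - B ^ 2)) := by
    simpa [evenPow, pow_mul] using hasSum_geom_series_inverse (B ^ 2) hB2
  have hodd : HasSum (fun k => evenPow B (2 * k + 1)) 0 := by
    simp [evenPow, hasSum_zero]
  simpa using heven.even_add_odd hodd

theorem summable_norm_mul_neg_pow (P : A) (hB : ‖B‖ < 1) :
    Summable fun m : ℕ => ‖P * (-B) ^ m‖ := by
  rw [← norm_neg] at hB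
  exact ((summable_norm_geometric_of_norm_lt_one hB).mul_left ‖P‖).of_nonneg_of_le
    (fun _ => norm_nonneg _) fun _ => norm_mul_le _ _

theorem tsum_mul_neg_pow [HasSummableGeomSeries A] (P : A) (hB : ‖B‖ < 1) :
    ∑' m : ℕ, P * (-B) ^ m = P * Ring.inverse (1 + B) := by
  rw [← norm_neg] at hB
  rw [(summable_geometric_of_norm_lt_one hB).tsum_mul_left, geom_series_eq_inverse (-B) hB,
    sub_neg_eq_add]

end Analysis

/-- Algebraic core of Lemma 2: in a Banach algebra with `‖B‖ < 1` and `DB = -BD - P`,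
the series `∑_{n≥1} (-1)^n ∑_{k=0}^{n-1} B^k D B^{n-k}` converges absolutely and equals
`(1-B²)⁻¹ B D + (1-B²)⁻¹ P (1+B)⁻¹`. -/
theorem stmt_3 {A : Type*} [NormedRing A] [CompleteSpace A] (B D P : A)
    (hB : ‖B‖ < 1) (h : D * B = -(B * D) - P) :
    Summable (fun n : ℕ =>
      ‖(-1:A) ^ (n+1) * ∑ k ∈ Finset.range (n+1), B ^ k * D * B ^ (n+1-k)‖) ∧
    (∑' n : ℕ, (-1:A) ^ (n+1) * ∑ k ∈ Finset.range (n+1), B ^ k * D * B ^ (n+1-k))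
      = Ring.inverse (1 - B ^ 2) * B * D
        + Ring.inverse (1 - B ^ 2) * P * Ring.inverse (1 + B) := by
  simp_rw [neg_one_pow_mul_sum_eq h]
  have he := summable_norm_evenPow hB
  have hg := summable_norm_mul_neg_pow P hB
  have hdiag : Summable fun n => ‖evenPow B n * (B * D)‖ :=
    (he.mul_right ‖B * D‖).of_nonneg_of_le (fun _ => norm_nonneg _) fun _ => norm_mul_le _ _
  have hcauchy := summable_norm_sum_mul_range_of_summable_norm he hg
  refine ⟨(hdiag.add hcauchy).of_nonneg_of_le (fun _ => norm_nonneg _) fun _ => norm_add_le _ _,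
    ?_⟩
  rw [hdiag.of_norm.tsum_add hcauchy.of_norm,
    ← tsum_mul_tsum_eq_tsum_sum_range_of_summable_norm he hg, he.of_norm.tsum_mul_right,
    tsum_mul_neg_pow P hB, (hasSum_evenPow hB).tsum_eq]
  simp only [mul_assoc]
end

section
/- Let B(s) be a family of elements of a Banach algebra, differentiable in s, with ‖B(s)‖ < 1, satisfying B'(s) = D B(s) for a fixed element D and D B(s) = -B(s) D - P(s) where P(s) = B(s) Q for some rank-one-like element Q. Then d/ds (1 + B(s))^{-1} = (1 - B(s)²)^{-1} B(s) D + (1 - B(s)²)^{-1} P(s) (1 + B(s))^{-1}. -/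
/-!
Differentiating `(1 + B)⁻¹` gives `-(1 + B)⁻¹ (D B) (1 + B)⁻¹`. Multiplying on the left by
`1 - B² = (1 - B)(1 + B)` and on the right by `1 + B`, the claim reduces to the polynomial
identity `-(1 - B) D B = B D (1 + B) + P`, which is exactly the commutation rule
`D B = -B D - P` expanded.
-/

theorem HasDerivAt.ringInverse {𝕜 A : Type*} [NontriviallyNormedField 𝕜] [NormedRing A]
    [NormedAlgebra 𝕜 A] [CompleteSpace A] {f : 𝕜 → A} {f' : A} {s : 𝕜}
    (hf : HasDerivAt f f' s) (hunit : IsUnit (f s)) :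
    HasDerivAt (fun t => Ring.inverse (f t))
      (-(Ring.inverse (f s) * f' * Ring.inverse (f s))) s := by
  obtain ⟨u, hu⟩ := hunit
  have := (hasFDerivAt_ringInverse (𝕜 := 𝕜) u).comp_hasDerivAt_of_eq s hf hu
  simpa [← hu, Function.comp_def] using this

theorem neg_inverse_one_add_mul_mul_inverse_one_add {R : Type*} [Ring R] {b d p : R}
    (hadd : IsUnit (1 + b)) (hsub : IsUnit (1 - b)) (hcomm : d * b = -(b * d) - p) :
    -(Ring.inverse (1 + b) * (d * b) * Ring.inverse (1 + b))
      = Ring.inverse (1 - b ^ 2) * b * d + Ring.inverse (1 - b ^ 2) * p * Ring.inverse (1 + b) := by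
  set x := Ring.inverse (1 + b)
  set y := Ring.inverse (1 - b ^ 2)
  have hsq : 1 - b ^ 2 = (1 - b) * (1 + b) := by noncomm_ring
  have hy : y * ((1 - b) * (1 + b)) = 1 := by
    rw [← hsq]; exact Ring.inverse_mul_cancel _ (hsq ▸ hsub.mul hadd)
  have hx : (1 + b) * x = 1 := Ring.mul_inverse_cancel _ hadd
  have hkey : -((1 - b) * (d * b)) = b * d * (1 + b) + p := by
    rw [mul_add, mul_one, mul_assoc, hcomm]; noncomm_ring
  calc -(x * (d * b) * x)
      = y * ((1 - b) * (1 + b)) * -(x * (d * b) * x) := by rw [hy, one_mul]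
    _ = y * (1 - b) * -((1 + b) * x * (d * b) * x) := by noncomm_ring
    _ = y * -((1 - b) * (d * b)) * x := by rw [hx, one_mul]; noncomm_ring
    _ = y * (b * d * (1 + b) + p) * x := by rw [hkey]
    _ = y * b * d * ((1 + b) * x) + y * p * x := by noncomm_ring
    _ = y * b * d + y * p * x := by rw [hx, mul_one]

theorem stmt_14_general {A : Type*} [NormedRing A] [NormedAlgebra ℝ A] [CompleteSpace A]
    (B P : ℝ → A) (D : A)
    (hderiv : ∀ s, HasDerivAt B (D * B s) s)
    (hcomm : ∀ s, D * B s = -(B s * D) - P s)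
    (hB : ∀ s, ‖B s‖ < 1) (s : ℝ) :
    HasDerivAt (fun t => Ring.inverse (1 + B t))
      (Ring.inverse (1 - (B s) ^ 2) * (B s) * D
        + Ring.inverse (1 - (B s) ^ 2) * P s * Ring.inverse (1 + B s)) s := by
  have hadd : IsUnit (1 + B s) := by
    simpa using isUnit_one_sub_of_norm_lt_one (x := -B s) (by simpa using hB s)
  have hsub : IsUnit (1 - B s) := isUnit_one_sub_of_norm_lt_one (hB s)
  rw [← neg_inverse_one_add_mul_mul_inverse_one_add hadd hsub (hcomm s)]
  exact ((hderiv s).const_add 1).ringInverse hadd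

/-- Abstract Banach-algebra version of Lemma 2: if `B'(s) = D B(s)`,
`D B(s) = -B(s) D - P(s)` with `P(s) = B(s) Q`, and `‖B(s)‖ < 1`, then
`d/ds (1+B(s))⁻¹ = (1-B(s)²)⁻¹ B(s) D + (1-B(s)²)⁻¹ P(s) (1+B(s))⁻¹`. -/
theorem stmt_14 {A : Type*} [NormedRing A] [NormedAlgebra ℝ A] [CompleteSpace A]
    (B P : ℝ → A) (D Q : A)
    (hderiv : ∀ s, HasDerivAt B (D * B s) s)
    (hP : ∀ s, P s = B s * Q)
    (hcomm : ∀ s, D * B s = -(B s * D) - P s)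
    (hB : ∀ s, ‖B s‖ < 1) (s : ℝ) :
    HasDerivAt (fun t => Ring.inverse (1 + B t))
      (Ring.inverse (1 - (B s) ^ 2) * (B s) * D
        + Ring.inverse (1 - (B s) ^ 2) * P s * Ring.inverse (1 + B s)) s :=
  stmt_14_general B P D hderiv hcomm hB s
end
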